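/- Let 0 < q₀ < 1 and let (X_1, X_2) be generated by: X_1 ~ Unif(0,1), and conditionally on X_1, X_2 = X_1 with probability 1−q₀ and X_2 ~ Unif(0,1) independently with probability q₀ (this chain is stationary with uniform marginal). For b ∈ ℕ define the pair weight w_b(a_1,a_2) = −log₂ P(⌊2^b X_1⌋ = a_1, ⌊2^b X_2⌋ = a_2), and for u ∈ [0,1)^n define c_w(u) = Σ_{i=1}^{n−1} w_b(⌊2^b u_i⌋, ⌊2^b u_{i+1}⌋). Then there exist a constant C (depending only on q₀), a real number κ_b (independent of u), and γ_b ∈ ℝ with |γ_b| ≤ C/b, such that for all b ≥ 1 and all u ∈ [0,1)^n: (1/b)·c_w(u) = (1+γ_b)·|{i ∈ {1,...,n−1} : ⌊2^b u_i⌋ ≠ ⌊2^b u_{i+1}⌋}| + κ_b. Consequently, for every λ > 0 and y ∈ ℝ^n, the minimizers over u ∈ [0,1)^n of ‖y − u‖₂² + (λ/b)·c_w(u) coincide with the minimizers of ‖y − u‖₂² + λ·(1+γ_b)·N_J(u), where N_J(u) = |{i : ⌊2^b u_i⌋ ≠ ⌊2^b u_{i+1}⌋}| counts quantized jumps. -/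

import Mathlib

/-!
A pair of quantization cells `(a₁, a₂)` has probability `2⁻ᵇ·s_b` with
`s_b = 1 - q₀ + q₀·2⁻ᵇ` when `a₁ = a₂`, and `q₀·4⁻ᵇ` otherwise, so the pair weight takes only
the two values `b - log₂ s_b` (stay) and `2b - log₂ q₀` (jump). Hence
`c_w(u) = (n-1)(b - log₂ s_b) + N_J(u)·b·(1 + γ_b)` with `γ_b = (log₂ s_b - log₂ q₀)/b`, and
`1 - q₀ ≤ s_b ≤ 1` gives `|γ_b| ≤ -(log₂ q₀ + log₂ (1 - q₀))/b`. The two objectives then differ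
by the constant `λ·κ_b`, so they have the same minimizers.
-/

open MeasureTheory

/-- The joint law of two consecutive samples of the piecewise-constant 1-Markov source:
`X₁ ~ Unif(0,1)`, and `X₂ = X₁` with probability `1-q₀`, else a fresh `Unif(0,1)` draw. -/
noncomputable def pcPairMu (q0 : ℝ) : Measure (ℝ × ℝ) :=
  ENNReal.ofReal (1 - q0) •
      (volume.restrict (Set.Ioo (0 : ℝ) 1)).map (fun x => (x, x)) +
    ENNReal.ofReal q0 •
      ((volume.restrict (Set.Ioo (0 : ℝ) 1)).prod (volume.restrict (Set.Ioo (0 : ℝ) 1)))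

/-- The Q-MAP pair weight of a pair of quantization cells `(a₁, a₂)` at bitrate `b`. -/
noncomputable def pcPairWeight (q0 : ℝ) (b : ℕ) (a1 a2 : ℤ) : ℝ :=
  - Real.logb 2
      ((pcPairMu q0 {z : ℝ × ℝ | ⌊(2 : ℝ) ^ b * z.1⌋ = a1 ∧ ⌊(2 : ℝ) ^ b * z.2⌋ = a2}).toReal)

lemma setOf_floor_mul_eq {c : ℝ} (hc : 0 < c) (a : ℤ) :
    {x : ℝ | ⌊c * x⌋ = a} = Set.Ico (a / c) ((a + 1) / c) := by
  ext x
  rw [Set.mem_ofPred_eq, Int.floor_eq_iff, Set.mem_Ico, div_le_iff₀ hc, lt_div_iff₀ hc,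
    mul_comm x]

lemma floor_two_pow_mul_mem_Ico (b : ℕ) {x : ℝ} (hx : x ∈ Set.Ico (0 : ℝ) 1) :
    ⌊(2 : ℝ) ^ b * x⌋ ∈ Set.Ico 0 (2 ^ b) := by
  have hb : (0 : ℝ) < 2 ^ b := by positivity
  refine ⟨Int.floor_nonneg.mpr (by nlinarith [hx.1]), Int.floor_lt.mpr ?_⟩
  push_cast
  nlinarith [hx.2]

lemma volume_restrict_Ioo_Ico {l r : ℝ} (hl : 0 ≤ l) (hr : r ≤ 1) :
    volume.restrict (Set.Ioo (0 : ℝ) 1) (Set.Ico l r) = ENNReal.ofReal (r - l) := by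
  rw [Measure.restrict_congr_set Ioo_ae_eq_Icc,
    Measure.restrict_eq_self _ (Set.Ico_subset_Icc_self.trans (Set.Icc_subset_Icc hl hr)),
    Real.volume_Ico]

lemma volume_restrict_Ioo_setOf_floor_two_pow_mul_eq (b : ℕ) {a : ℤ}
    (ha : a ∈ Set.Ico 0 (2 ^ b)) :
    volume.restrict (Set.Ioo (0 : ℝ) 1) {x : ℝ | ⌊(2 : ℝ) ^ b * x⌋ = a} =
      ENNReal.ofReal ((2 : ℝ) ^ b)⁻¹ := by
  have hc : (0 : ℝ) < 2 ^ b := by positivity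
  have ha0 : (0 : ℝ) ≤ a := by exact_mod_cast ha.1
  have ha1 : (a : ℝ) + 1 ≤ 2 ^ b := by exact_mod_cast Int.add_one_le_of_lt ha.2
  rw [setOf_floor_mul_eq hc, volume_restrict_Ioo_Ico (by positivity) ((div_le_one hc).mpr ha1)]
  congr 1
  field_simp
  ring

lemma pcPairMu_prod (q0 : ℝ) {A B : Set ℝ} (hA : MeasurableSet A) (hB : MeasurableSet B) :
    pcPairMu q0 (A ×ˢ B) =
      ENNReal.ofReal (1 - q0) * volume.restrict (Set.Ioo (0 : ℝ) 1) (A ∩ B) +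
        ENNReal.ofReal q0 *
          (volume.restrict (Set.Ioo (0 : ℝ) 1) A * volume.restrict (Set.Ioo (0 : ℝ) 1) B) := by
  rw [pcPairMu, Measure.add_apply, Measure.smul_apply, Measure.smul_apply,
    Measure.map_apply (by fun_prop) (hA.prod hB), Set.mk_preimage_prod,
    Measure.prod_prod, smul_eq_mul, smul_eq_mul]
  rfl

/-- The conditional probability that `X₂` falls in the quantization cell of `X₁`. -/
noncomputable def pcStayProb (q0 : ℝ) (b : ℕ) : ℝ := 1 - q0 + q0 * ((2 : ℝ) ^ b)⁻¹

lemma pcStayProb_mem_Icc {q0 : ℝ} (hq0 : 0 ≤ q0) (b : ℕ) :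
    pcStayProb q0 b ∈ Set.Icc (1 - q0) 1 := by
  have he : 0 < ((2 : ℝ) ^ b)⁻¹ := by positivity
  have he1 : ((2 : ℝ) ^ b)⁻¹ ≤ 1 := inv_le_one_of_one_le₀ (one_le_pow₀ one_le_two)
  constructor <;> unfold pcStayProb <;> nlinarith

lemma pcStayProb_pos {q0 : ℝ} (hq0 : 0 < q0) (hq1 : q0 ≤ 1) (b : ℕ) : 0 < pcStayProb q0 b :=
  add_pos_of_nonneg_of_pos (sub_nonneg.mpr hq1) (by positivity)

lemma toReal_pcPairMu_cells {q0 : ℝ} (hq0 : 0 ≤ q0) (hq1 : q0 ≤ 1) (b : ℕ) {a1 a2 : ℤ}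
    (ha1 : a1 ∈ Set.Ico 0 (2 ^ b)) (ha2 : a2 ∈ Set.Ico 0 (2 ^ b)) :
    (pcPairMu q0 {z : ℝ × ℝ | ⌊(2 : ℝ) ^ b * z.1⌋ = a1 ∧ ⌊(2 : ℝ) ^ b * z.2⌋ = a2}).toReal =
      if a1 = a2 then ((2 : ℝ) ^ b)⁻¹ * pcStayProb q0 b else q0 * ((2 : ℝ) ^ b)⁻¹ ^ 2 := by
  have hcell : ∀ a : ℤ, MeasurableSet {x : ℝ | ⌊(2 : ℝ) ^ b * x⌋ = a} := fun a => by
    rw [setOf_floor_mul_eq (by positivity)]; exact measurableSet_Ico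
  have he : 0 ≤ ((2 : ℝ) ^ b)⁻¹ := by positivity
  have hprod : {z : ℝ × ℝ | ⌊(2 : ℝ) ^ b * z.1⌋ = a1 ∧ ⌊(2 : ℝ) ^ b * z.2⌋ = a2} =
      {x : ℝ | ⌊(2 : ℝ) ^ b * x⌋ = a1} ×ˢ {x : ℝ | ⌊(2 : ℝ) ^ b * x⌋ = a2} := rfl
  rw [hprod, pcPairMu_prod q0 (hcell a1) (hcell a2),
    volume_restrict_Ioo_setOf_floor_two_pow_mul_eq b ha1,
    volume_restrict_Ioo_setOf_floor_two_pow_mul_eq b ha2]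
  split_ifs with h
  · subst h
    rw [Set.inter_self, volume_restrict_Ioo_setOf_floor_two_pow_mul_eq b ha1,
      ← ENNReal.ofReal_mul (sub_nonneg.mpr hq1), ← ENNReal.ofReal_mul he,
      ← ENNReal.ofReal_mul hq0, ← ENNReal.ofReal_add (by positivity) (by positivity),
      ENNReal.toReal_ofReal (by positivity), pcStayProb]
    ring
  · have hdisj : {x : ℝ | ⌊(2 : ℝ) ^ b * x⌋ = a1} ∩ {x : ℝ | ⌊(2 : ℝ) ^ b * x⌋ = a2} = ∅ := by
      ext x; simp only [Set.mem_inter_iff, Set.mem_ofPred_eq, Set.mem_empty_iff_false, iff_false]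
      rintro ⟨rfl, rfl⟩; exact h rfl
    rw [hdisj, measure_empty, mul_zero, zero_add, ← ENNReal.ofReal_mul he, ← ENNReal.ofReal_mul hq0,
      ENNReal.toReal_ofReal (by positivity), sq]

lemma pcPairWeight_eq {q0 : ℝ} (hq0 : 0 < q0) (hq1 : q0 ≤ 1) (b : ℕ) {a1 a2 : ℤ}
    (ha1 : a1 ∈ Set.Ico 0 (2 ^ b)) (ha2 : a2 ∈ Set.Ico 0 (2 ^ b)) :
    pcPairWeight q0 b a1 a2 =
      if a1 = a2 then b - Real.logb 2 (pcStayProb q0 b) else 2 * b - Real.logb 2 q0 := by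
  have he : ((2 : ℝ) ^ b)⁻¹ ≠ 0 := by positivity
  have hloge : Real.logb 2 ((2 : ℝ) ^ b)⁻¹ = -b := by
    rw [Real.logb_inv, Real.logb_pow, Real.logb_self_eq_one one_lt_two, mul_one]
  rw [pcPairWeight, toReal_pcPairMu_cells hq0.le hq1 b ha1 ha2]
  split_ifs
  · rw [Real.logb_mul he (pcStayProb_pos hq0 hq1 b).ne', hloge]
    ring
  · rw [Real.logb_mul hq0.ne' (pow_ne_zero 2 he), Real.logb_pow, hloge]
    push_cast
    ring

lemma Finset.sum_ite_const_eq {ι R : Type*} [CommRing R] (s : Finset ι) (p : ι → Prop)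
    [DecidablePred p] (x y : R) :
    ∑ i ∈ s, (if p i then x else y) = s.card * x + (s.filter (fun i => ¬ p i)).card * (y - x) := by
  rw [Finset.sum_ite, Finset.sum_const, Finset.sum_const, nsmul_eq_mul, nsmul_eq_mul,
    ← Finset.card_filter_add_card_filter_not p (s := s)]
  push_cast
  ring

lemma div_mul_sum_pcPairWeight {q0 : ℝ} (hq0 : 0 < q0) (hq1 : q0 ≤ 1) {b : ℕ} (hb : b ≠ 0)
    (c : ℝ) (n : ℕ) {u : ℕ → ℝ} (hu : ∀ i ∈ Finset.Icc 1 n, u i ∈ Set.Ico (0 : ℝ) 1) :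
    c / b * ∑ i ∈ Finset.Icc 1 (n - 1),
        pcPairWeight q0 b ⌊(2 : ℝ) ^ b * u i⌋ ⌊(2 : ℝ) ^ b * u (i + 1)⌋ =
      c * (1 + (Real.logb 2 (pcStayProb q0 b) - Real.logb 2 q0) / b) *
          ((Finset.Icc 1 (n - 1)).filter
            (fun i => ⌊(2 : ℝ) ^ b * u i⌋ ≠ ⌊(2 : ℝ) ^ b * u (i + 1)⌋)).card +
        c * (((n - 1 : ℕ) : ℝ) * ((b - Real.logb 2 (pcStayProb q0 b)) / b)) := by
  have hcell : ∀ i ∈ Finset.Icc 1 n, ⌊(2 : ℝ) ^ b * u i⌋ ∈ Set.Ico 0 (2 ^ b) :=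
    fun i hi => floor_two_pow_mul_mem_Ico b (hu i hi)
  rw [Finset.sum_congr rfl fun i hi => pcPairWeight_eq hq0 hq1 b
      (hcell i (by simp only [Finset.mem_Icc] at hi ⊢; omega))
      (hcell (i + 1) (by simp only [Finset.mem_Icc] at hi ⊢; omega)),
    Finset.sum_ite_const_eq, Nat.card_Icc, Nat.add_sub_cancel]
  field_simp
  ring

lemma abs_logb_pcStayProb_sub_logb_le {q0 : ℝ} (hq0 : 0 < q0) (hq1 : q0 < 1) (b : ℕ) :
    |Real.logb 2 (pcStayProb q0 b) - Real.logb 2 q0| ≤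
      -Real.logb 2 q0 - Real.logb 2 (1 - q0) := by
  obtain ⟨hlo, hhi⟩ := pcStayProb_mem_Icc hq0.le b
  have hstay_lo : Real.logb 2 (1 - q0) ≤ Real.logb 2 (pcStayProb q0 b) :=
    Real.logb_le_logb_of_le one_lt_two (sub_pos.mpr hq1) hlo
  have hstay_hi : Real.logb 2 (pcStayProb q0 b) ≤ 0 :=
    Real.logb_nonpos one_lt_two (pcStayProb_pos hq0 hq1.le b).le hhi
  have hq : Real.logb 2 q0 ≤ 0 := Real.logb_nonpos one_lt_two hq0.le hq1.le
  have hq' : Real.logb 2 (1 - q0) ≤ 0 :=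
    Real.logb_nonpos one_lt_two (sub_nonneg.mpr hq1.le) (sub_le_self _ hq0.le)
  rw [abs_le]
  constructor <;> linarith

/-- Piecewise-constant 1-Markov example for the Q-MAP denoiser: up to an additive constant
`κ` and a multiplicative factor `1 + γ_b` with `|γ_b| ≤ C/b`, the normalized Q-MAP cost
`(1/b)·c_w(u)` counts the quantized jumps of `u`; consequently the Q-MAP minimizers
coincide with the jump-penalized least-squares minimizers. -/
theorem stmt_14 (q0 : ℝ) (hq0 : 0 < q0) (hq1 : q0 < 1) :
    ∃ C : ℝ, ∃ γ : ℕ → ℝ, ∃ κ : ℕ → ℕ → ℝ,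
      ∀ b : ℕ, 1 ≤ b →
        |γ b| ≤ C / b ∧
        ∀ n : ℕ, ∀ u : ℕ → ℝ, (∀ i ∈ Finset.Icc 1 n, u i ∈ Set.Ico (0 : ℝ) 1) →
          (1 / b : ℝ) *
              (∑ i ∈ Finset.Icc 1 (n - 1),
                pcPairWeight q0 b ⌊(2 : ℝ) ^ b * u i⌋ ⌊(2 : ℝ) ^ b * u (i + 1)⌋) =
            (1 + γ b) *
              ((Finset.Icc 1 (n - 1)).filter
                (fun i => ⌊(2 : ℝ) ^ b * u i⌋ ≠ ⌊(2 : ℝ) ^ b * u (i + 1)⌋)).card + κ n b ∧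
          (∀ lam : ℝ, 0 < lam → ∀ y : ℕ → ℝ,
            ((∀ w : ℕ → ℝ, (∀ i ∈ Finset.Icc 1 n, w i ∈ Set.Ico (0 : ℝ) 1) →
                (∑ i ∈ Finset.Icc 1 n, (y i - u i) ^ 2) +
                  (lam / b) * ∑ i ∈ Finset.Icc 1 (n - 1),
                    pcPairWeight q0 b ⌊(2 : ℝ) ^ b * u i⌋ ⌊(2 : ℝ) ^ b * u (i + 1)⌋ ≤
                (∑ i ∈ Finset.Icc 1 n, (y i - w i) ^ 2) +
                  (lam / b) * ∑ i ∈ Finset.Icc 1 (n - 1),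
                    pcPairWeight q0 b ⌊(2 : ℝ) ^ b * w i⌋ ⌊(2 : ℝ) ^ b * w (i + 1)⌋)
              ↔
             (∀ w : ℕ → ℝ, (∀ i ∈ Finset.Icc 1 n, w i ∈ Set.Ico (0 : ℝ) 1) →
                (∑ i ∈ Finset.Icc 1 n, (y i - u i) ^ 2) +
                  lam * (1 + γ b) *
                    ((Finset.Icc 1 (n - 1)).filter
                      (fun i => ⌊(2 : ℝ) ^ b * u i⌋ ≠ ⌊(2 : ℝ) ^ b * u (i + 1)⌋)).card ≤
                (∑ i ∈ Finset.Icc 1 n, (y i - w i) ^ 2) +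
                  lam * (1 + γ b) *
                    ((Finset.Icc 1 (n - 1)).filter
                      (fun i => ⌊(2 : ℝ) ^ b * w i⌋ ≠ ⌊(2 : ℝ) ^ b * w (i + 1)⌋)).card))) := by
  refine ⟨-Real.logb 2 q0 - Real.logb 2 (1 - q0),
    fun b => (Real.logb 2 (pcStayProb q0 b) - Real.logb 2 q0) / b,
    fun n b => ((n - 1 : ℕ) : ℝ) * ((b - Real.logb 2 (pcStayProb q0 b)) / b),
    fun b hb => ⟨?_, fun n u hu => ⟨?_, fun lam _ y => ?_⟩⟩⟩
  · rw [abs_div, Nat.abs_cast]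
    exact div_le_div_of_nonneg_right (abs_logb_pcStayProb_sub_logb_le hq0 hq1 b) b.cast_nonneg
  · simpa only [one_mul] using div_mul_sum_pcPairWeight hq0 hq1.le (by omega) 1 n hu
  · refine forall₂_congr fun w hw => ?_
    rw [div_mul_sum_pcPairWeight hq0 hq1.le (by omega) lam n hu,
      div_mul_sum_pcPairWeight hq0 hq1.le (by omega) lam n hw, ← add_assoc, ← add_assoc,
      add_le_add_iff_right]
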